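/- Let σ(t) = 1/(1 + e^{−t}) be the sigmoid link, so that the matching loss is ℓ_{m,σ}(t, y) = ln(1 + e^t) − ln 2 − y·t and the associated proper loss is ℓ_{p,σ}(v, y) = ℓ_{m,σ}(ln(v/(1−v)), y) = y·ln(1/v) + (1−y)·ln(1/(1−v)) − ln 2 for v ∈ (0,1). Let D be the probability distribution on [0,1] × {0,1} where x is uniform on {0.3, 0.5} and P(y = 1 | x) = σ(x). Then for every w ∈ ℝ with 0 < 0.3·w and 0.5·w < 1 (so that σ^{-1}(w·x) is defined for both values of x): E_{(x,y)∼D}[ℓ_{p,σ}(w·x, y)] ≥ E_{(x,y)∼D}[ℓ_{m,σ}(x, y)] + 0.03. -/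

import Mathlib

open MeasureTheory

/-- The label of an outcome `b ∈ {0,1}`, as a real number. -/
def label (b : Bool) : ℝ := if b then 1 else 0

/-- The matching loss `ℓ_{m,σ}(t,y) = ∫_0^t (σ(τ) - y) dτ` induced by a link function `σ`. -/
noncomputable def matchingLoss (σ : ℝ → ℝ) (t y : ℝ) : ℝ := ∫ τ in (0:ℝ)..t, (σ τ - y)

/-- The sigmoid link `σ(t) = 1/(1 + e^{-t})`. -/
noncomputable def sigmoid (t : ℝ) : ℝ := 1 / (1 + Real.exp (-t))

/-- The proper loss `ℓ_{p,σ}(v,y) = ℓ_{m,σ}(σ^{-1}(v), y)` induced by the sigmoid link,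
where `σ^{-1}(v) = ln(v/(1-v))`. -/
noncomputable def sigmoidProperLoss (v y : ℝ) : ℝ :=
  matchingLoss sigmoid (Real.log (v / (1 - v))) y

/-- The distribution on `[0,1] × {0,1}` where `x` is uniform on `{0.3, 0.5}` and
`P(y = 1 | x) = sigmoid x`. -/
noncomputable def Dex : Measure (ℝ × Bool) :=
  ENNReal.ofReal ((1/2) * sigmoid 0.3) • Measure.dirac ((0.3 : ℝ), true) +
  ENNReal.ofReal ((1/2) * (1 - sigmoid 0.3)) • Measure.dirac ((0.3 : ℝ), false) +
  ENNReal.ofReal ((1/2) * sigmoid 0.5) • Measure.dirac ((0.5 : ℝ), true) +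
  ENNReal.ofReal ((1/2) * (1 - sigmoid 0.5)) • Measure.dirac ((0.5 : ℝ), false)

/-! ### Auxiliary lemmas -/

lemma sigmoid_eq (t : ℝ) : sigmoid t = Real.exp t / (1 + Real.exp t) := by
  unfold sigmoid; rw [Real.exp_neg]
  have h := (Real.exp_pos t); field_simp; ring

lemma sigmoid_pos (t : ℝ) : 0 < sigmoid t := by unfold sigmoid; positivity

lemma sigmoid_lt_one (t : ℝ) : sigmoid t < 1 := by
  unfold sigmoid
  rw [div_lt_one (by positivity)]
  linarith [Real.exp_pos (-t)]

lemma sigmoid_cont : Continuous sigmoid := by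
  unfold sigmoid
  exact continuous_const.div (by continuity) (fun x => by positivity)

lemma matchingLoss_eq (t y : ℝ) :
    matchingLoss sigmoid t y = Real.log (1 + Real.exp t) - Real.log 2 - y * t := by
  unfold matchingLoss
  have h : ∀ τ ∈ Set.uIcc (0:ℝ) t,
      HasDerivAt (fun u => Real.log (1 + Real.exp u) - y * u) (sigmoid τ - y) τ := by
    intro τ _
    have h1 : HasDerivAt (fun u : ℝ => 1 + Real.exp u) (Real.exp τ) τ :=
      (Real.hasDerivAt_exp τ).const_add 1
    have h2 := h1.log (by positivity)
    have h3 : HasDerivAt (fun u : ℝ => y * u) y τ := by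
      simpa using (hasDerivAt_id τ).const_mul y
    have h4 := h2.sub h3
    rw [sigmoid_eq]
    exact h4
  rw [intervalIntegral.integral_eq_sub_of_hasDerivAt h
      ((sigmoid_cont.sub continuous_const).intervalIntegrable 0 t)]
  simp [Real.exp_zero]
  ring

lemma properLoss_eq {v : ℝ} (y : ℝ) (h0 : 0 < v) (h1 : v < 1) :
    sigmoidProperLoss v y = -(y * Real.log v) - (1 - y) * Real.log (1 - v) - Real.log 2 := by
  unfold sigmoidProperLoss
  rw [matchingLoss_eq]
  have h1v : 0 < 1 - v := by linarith
  have he : Real.exp (Real.log (v / (1 - v))) = v / (1 - v) := Real.exp_log (by positivity)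
  rw [he]
  have h2 : 1 + v / (1 - v) = 1 / (1 - v) := by field_simp; ring
  rw [h2, one_div, Real.log_inv, Real.log_div (ne_of_gt h0) (ne_of_gt h1v)]
  ring

lemma integrable_dirac' {f : ℝ × Bool → ℝ} (a : ℝ × Bool) :
    Integrable f (Measure.dirac a) := by
  refine (integrable_const (f a)).congr ?_
  rw [Filter.EventuallyEq, ae_dirac_eq]
  exact Filter.eventually_pure.mpr rfl

lemma integral_Dex (f : ℝ × Bool → ℝ) :
    ∫ z, f z ∂Dex =
      (1/2 * sigmoid 0.3) * f (0.3, true) + (1/2 * (1 - sigmoid 0.3)) * f (0.3, false) +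
      (1/2 * sigmoid 0.5) * f (0.5, true) + (1/2 * (1 - sigmoid 0.5)) * f (0.5, false) := by
  have hint : ∀ (c : ℝ) (a : ℝ × Bool),
      Integrable f (ENNReal.ofReal c • Measure.dirac a) :=
    fun c a => (integrable_dirac' a).smul_measure ENNReal.ofReal_ne_top
  have hI : ∀ (c : ℝ) (a : ℝ × Bool), 0 ≤ c →
      ∫ z, f z ∂(ENNReal.ofReal c • Measure.dirac a) = c * f a := by
    intro c a hc
    rw [integral_smul_measure, integral_dirac, ENNReal.toReal_ofReal hc, smul_eq_mul]
  have h1 : (0:ℝ) ≤ 1/2 * sigmoid 0.3 := by have := sigmoid_pos 0.3; linarith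
  have h2 : (0:ℝ) ≤ 1/2 * (1 - sigmoid 0.3) := by have := sigmoid_lt_one 0.3; linarith
  have h3 : (0:ℝ) ≤ 1/2 * sigmoid 0.5 := by have := sigmoid_pos 0.5; linarith
  have h4 : (0:ℝ) ≤ 1/2 * (1 - sigmoid 0.5) := by have := sigmoid_lt_one 0.5; linarith
  unfold Dex
  rw [integral_add_measure (((hint _ _).add_measure (hint _ _)).add_measure (hint _ _)) (hint _ _),
    integral_add_measure ((hint _ _).add_measure (hint _ _)) (hint _ _),
    integral_add_measure (hint _ _) (hint _ _),
    hI _ _ h1, hI _ _ h2, hI _ _ h3, hI _ _ h4]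

/-! ### Numerical bounds -/

lemma exp_lo' {x b : ℝ} (hx : 0 ≤ x)
    (hb : b ≤ ∑ m ∈ Finset.range 11, x ^ m / m.factorial) : b ≤ Real.exp x :=
  le_trans hb (Real.sum_le_exp_of_nonneg hx 11)

lemma exp_hi' {x b : ℝ} (hx : 0 ≤ x) (hx1 : x ≤ 1)
    (hb : (∑ m ∈ Finset.range 11, x ^ m / m.factorial) + x ^ 11 * 12 / (39916800 * 11) ≤ b) :
    Real.exp x ≤ b := by
  have h := Real.exp_bound' hx hx1 (n := 11) (by norm_num)
  refine le_trans (h.trans ?_) hb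
  norm_num [Nat.factorial]

lemma E3_lo : (1.349858:ℝ) ≤ Real.exp 0.3 := by
  refine exp_lo' (by norm_num) ?_; norm_num [Finset.sum_range_succ, Nat.factorial]
lemma E3_hi : Real.exp 0.3 ≤ 1.349859 := by
  refine exp_hi' (by norm_num) (by norm_num) ?_; norm_num [Finset.sum_range_succ, Nat.factorial]
lemma E5_lo : (1.648721:ℝ) ≤ Real.exp 0.5 := by
  refine exp_lo' (by norm_num) ?_; norm_num [Finset.sum_range_succ, Nat.factorial]
lemma E5_hi : Real.exp 0.5 ≤ 1.648722 := by
  refine exp_hi' (by norm_num) (by norm_num) ?_; norm_num [Finset.sum_range_succ, Nat.factorial]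

lemma p1_lo : (0.574442:ℝ) ≤ sigmoid 0.3 := by
  rw [sigmoid_eq]; rw [le_div_iff₀ (by positivity)]; nlinarith [E3_lo]
lemma p1_hi : sigmoid 0.3 ≤ 0.574443 := by
  rw [sigmoid_eq]; rw [div_le_iff₀ (by positivity)]; nlinarith [E3_hi, E3_lo]
lemma p2_lo : (0.622459:ℝ) ≤ sigmoid 0.5 := by
  rw [sigmoid_eq]; rw [le_div_iff₀ (by positivity)]; nlinarith [E5_lo]
lemma p2_hi : sigmoid 0.5 ≤ 0.622460 := by
  rw [sigmoid_eq]; rw [div_le_iff₀ (by positivity)]; nlinarith [E5_hi, E5_lo]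

lemma log_upper' {q c : ℝ} (hq : 0 < q) (h : Real.exp (-c) ≤ 1/q) : Real.log q ≤ c := by
  have h2 : (-c:ℝ) ≤ Real.log (1/q) := by
    rw [Real.le_log_iff_exp_le (by positivity)]; exact h
  rw [one_div, Real.log_inv] at h2; linarith

lemma lnq1 : Real.log 0.4209 ≤ -0.865358 := by
  refine log_upper' (by norm_num) ?_
  rw [neg_neg]
  refine exp_hi' (by norm_num) (by norm_num) ?_; norm_num [Finset.sum_range_succ, Nat.factorial]
lemma lnq2 : Real.log 0.5791 ≤ -0.546278 := by
  refine log_upper' (by norm_num) ?_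
  rw [neg_neg]
  refine exp_hi' (by norm_num) (by norm_num) ?_; norm_num [Finset.sum_range_succ, Nat.factorial]
lemma lnq3 : Real.log 0.7016 ≤ -0.354390 := by
  refine log_upper' (by norm_num) ?_
  rw [neg_neg]
  refine exp_hi' (by norm_num) (by norm_num) ?_; norm_num [Finset.sum_range_succ, Nat.factorial]
lemma lnq4 : Real.log 0.2984 ≤ -1.209318 := by
  refine log_upper' (by norm_num) ?_
  rw [neg_neg]
  have h : Real.exp 1.209318 = Real.exp 0.604659 * Real.exp 0.604659 := by
    rw [← Real.exp_add]; norm_num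
  have h2 : Real.exp 0.604659 ≤ 1.830629 := by
    refine exp_hi' (by norm_num) (by norm_num) ?_; norm_num [Finset.sum_range_succ, Nat.factorial]
  rw [h]
  nlinarith [Real.exp_pos (0.604659:ℝ)]

lemma L3_hi : Real.log (1 + Real.exp 0.3) ≤ 0.854357 := by
  rw [Real.log_le_iff_le_exp (by positivity)]
  have h : (2.349859:ℝ) ≤ Real.exp 0.854357 := by
    refine exp_lo' (by norm_num) ?_; norm_num [Finset.sum_range_succ, Nat.factorial]
  linarith [E3_hi]
lemma L5_hi : Real.log (1 + Real.exp 0.5) ≤ 0.974079 := by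
  rw [Real.log_le_iff_le_exp (by positivity)]
  have h : (2.648722:ℝ) ≤ Real.exp 0.974079 := by
    refine exp_lo' (by norm_num) ?_; norm_num [Finset.sum_range_succ, Nat.factorial]
  linarith [E5_hi]

lemma log_tangent {t q c : ℝ} (ht : 0 < t) (hq : 0 < q) (hlog : Real.log q ≤ c) :
    Real.log t ≤ c + t / q - 1 := by
  have h := Real.log_le_sub_one_of_pos (show (0:ℝ) < t / q by positivity)
  rw [Real.log_div (ne_of_gt ht) (ne_of_gt hq)] at h
  linarith

/-- The key inequality. -/
lemma key (w : ℝ) (hw : 0 < w) (hw2 : w * 0.5 < 1) :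
    Real.log (1 + Real.exp 0.3) + Real.log (1 + Real.exp 0.5)
      - 0.3 * sigmoid 0.3 - 0.5 * sigmoid 0.5 + 0.06
    ≤ -(sigmoid 0.3 * Real.log (w * 0.3)) - (1 - sigmoid 0.3) * Real.log (1 - w * 0.3)
      - (sigmoid 0.5 * Real.log (w * 0.5)) - (1 - sigmoid 0.5) * Real.log (1 - w * 0.5) := by
  have hwlt2 : w < 2 := by nlinarith
  have hT1 : Real.log (w * 0.3) ≤ -0.865358 + (w * 0.3) / 0.4209 - 1 :=
    log_tangent (by nlinarith) (by norm_num) lnq1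
  have hT2 : Real.log (1 - w * 0.3) ≤ -0.546278 + (1 - w * 0.3) / 0.5791 - 1 :=
    log_tangent (by nlinarith) (by norm_num) lnq2
  have hT3 : Real.log (w * 0.5) ≤ -0.354390 + (w * 0.5) / 0.7016 - 1 :=
    log_tangent (by nlinarith) (by norm_num) lnq3
  have hT4 : Real.log (1 - w * 0.5) ≤ -1.209318 + (1 - w * 0.5) / 0.2984 - 1 :=
    log_tangent (by nlinarith) (by norm_num) lnq4
  have hp1 := p1_lo; have hp1' := p1_hi; have hp2 := p2_lo; have hp2' := p2_hi
  have hb1 : (0:ℝ) < 1 - sigmoid 0.3 := by linarith [sigmoid_lt_one 0.3]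
  have hb2 : (0:ℝ) < 1 - sigmoid 0.5 := by linarith [sigmoid_lt_one 0.5]
  have hM1 : sigmoid 0.3 * Real.log (w * 0.3)
      ≤ sigmoid 0.3 * (-0.865358 + (w * 0.3) / 0.4209 - 1) :=
    mul_le_mul_of_nonneg_left hT1 (le_of_lt (sigmoid_pos 0.3))
  have hM2 : (1 - sigmoid 0.3) * Real.log (1 - w * 0.3)
      ≤ (1 - sigmoid 0.3) * (-0.546278 + (1 - w * 0.3) / 0.5791 - 1) :=
    mul_le_mul_of_nonneg_left hT2 hb1.le
  have hM3 : sigmoid 0.5 * Real.log (w * 0.5)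
      ≤ sigmoid 0.5 * (-0.354390 + (w * 0.5) / 0.7016 - 1) :=
    mul_le_mul_of_nonneg_left hT3 (le_of_lt (sigmoid_pos 0.5))
  have hM4 : (1 - sigmoid 0.5) * Real.log (1 - w * 0.5)
      ≤ (1 - sigmoid 0.5) * (-1.209318 + (1 - w * 0.5) / 0.2984 - 1) :=
    mul_le_mul_of_nonneg_left hT4 hb2.le
  have hpw1a : 0.574442 * w ≤ sigmoid 0.3 * w := mul_le_mul_of_nonneg_right hp1 hw.le
  have hpw1b : sigmoid 0.3 * w ≤ 0.574443 * w := mul_le_mul_of_nonneg_right hp1' hw.le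
  have hpw2a : 0.622459 * w ≤ sigmoid 0.5 * w := mul_le_mul_of_nonneg_right hp2 hw.le
  have hpw2b : sigmoid 0.5 * w ≤ 0.622460 * w := mul_le_mul_of_nonneg_right hp2' hw.le
  have hL3 := L3_hi
  have hL5 := L5_hi
  norm_num only at hM1 hM2 hM3 hM4 hp1 hp1' hp2 hp2' hL3 hL5 hpw1a hpw1b hpw2a hpw2b ⊢
  linarith

/-- No linear predictor `p(x) = w·x` is an omnipredictor (even up to error `0.03`) for
one-dimensional SIMs with matching losses: against the realizing comparator `c(x) = x`,
every linear predictor incurs proper loss at least `0.03` larger. -/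
theorem no_linear_omnipredictor :
    ∀ w : ℝ, 0 < 0.3 * w → 0.5 * w < 1 →
      (∫ z, matchingLoss sigmoid z.1 (label z.2) ∂Dex) + 0.03
        ≤ ∫ z, sigmoidProperLoss (w * z.1) (label z.2) ∂Dex := by
  intro w hw1 hw2
  have hw : 0 < w := by nlinarith
  have hw2' : w * 0.5 < 1 := by rw [mul_comm]; exact hw2
  have h03 : 0 < w * 0.3 := by nlinarith
  have h03' : w * 0.3 < 1 := by nlinarith
  have h05 : 0 < w * 0.5 := by nlinarith
  have h05' : w * 0.5 < 1 := hw2'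
  rw [integral_Dex (fun z => matchingLoss sigmoid z.1 (label z.2)),
    integral_Dex (fun z => sigmoidProperLoss (w * z.1) (label z.2))]
  simp only [label, if_true, if_false, Bool.false_eq_true]
  rw [matchingLoss_eq, matchingLoss_eq, matchingLoss_eq, matchingLoss_eq,
    properLoss_eq (1:ℝ) h03 h03', properLoss_eq (0:ℝ) h03 h03',
    properLoss_eq (1:ℝ) h05 h05', properLoss_eq (0:ℝ) h05 h05']
  have hkey := key w hw hw2'
  have hp1' := sigmoid_lt_one 0.3
  have hp2' := sigmoid_lt_one 0.5
  norm_num only at hkey ⊢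
  linarith
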